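/- Let (W,S) be a Coxeter system and v, w, x, z ∈ W with v ≤ w and w = zx with ℓ(w) = ℓ(z) + ℓ(x). Then there exists x' ≤ x⁻¹ such that v x' ≤ z. -/

import Mathlib

namespace CoxeterPaper

open CoxeterSystem

variable {B : Type*} {W : Type*} [Group W] {M : CoxeterMatrix B}

/-- The Bruhat order on a Coxeter group: the reflexive-transitive closure of the
relation `a < a * t` for `t` a reflection with length increasing. -/
def BruhatLE (cs : CoxeterSystem M W) (x y : W) : Prop :=
  Relation.ReflTransGen
    (fun a b => (∃ t, cs.IsReflection t ∧ b = a * t) ∧ cs.length a < cs.length b) x y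

/-- One step of the Demazure product with a simple reflection. -/
noncomputable def demStep (cs : CoxeterSystem M W) (x : W) (i : B) : W :=
  if cs.length x < cs.length (x * cs.simple i) then x * cs.simple i else x

/-- The Demazure product of `x` with the word `l`. -/
noncomputable def demWord (cs : CoxeterSystem M W) (x : W) (l : List B) : W :=
  l.foldl (demStep cs) x

/-- The Demazure product (Coxeter monoid product) of two elements: fold the
Demazure action of a reduced word of `y` onto `x`. -/
noncomputable def dem (cs : CoxeterSystem M W) (x y : W) : W :=
  demWord cs x (Classical.choose (cs.exists_reduced_word y))

/-- The standard parabolic subgroup attached to a set of simple indices. -/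
def parabolic (cs : CoxeterSystem M W) (I : Set B) : Subgroup W :=
  Subgroup.closure (cs.simple '' I)

/-- `I` is finitary if the parabolic subgroup `W_I` is finite. -/
def Finitary (cs : CoxeterSystem M W) (I : Set B) : Prop :=
  (parabolic cs I : Set W).Finite

/-- The double coset `W_I w W_J` as a subset of `W`. -/
def doset (cs : CoxeterSystem M W) (I J : Set B) (w : W) : Set W :=
  {x | ∃ a ∈ parabolic cs I, ∃ b ∈ parabolic cs J, x = a * w * b}

/-- `p` is an `(I,J)`-double coset. -/
def IsDCoset (cs : CoxeterSystem M W) (I J : Set B) (p : Set W) : Prop :=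
  ∃ w, p = doset cs I J w

/-- `m` is the Bruhat-minimal element of `p`. -/
def IsMinOf (cs : CoxeterSystem M W) (p : Set W) (m : W) : Prop :=
  m ∈ p ∧ ∀ x ∈ p, BruhatLE cs m x

/-- `m` is the Bruhat-maximal element of `p`. -/
def IsMaxOf (cs : CoxeterSystem M W) (p : Set W) (m : W) : Prop :=
  m ∈ p ∧ ∀ x ∈ p, BruhatLE cs x m

/-- `[I 0, …, I d]` is a singlestep expression. -/
def IsSinglestep (I : ℕ → Set B) (d : ℕ) : Prop :=
  ∀ k < d, (∃ s, s ∉ I k ∧ I (k + 1) = insert s (I k)) ∨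
    (∃ s, s ∈ I k ∧ I (k + 1) = I k \ {s})

/-- `p` is a path subordinate to the singlestep expression `[I 0, …, I d]`. -/
def IsSubPath (cs : CoxeterSystem M W) (I : ℕ → Set B) (d : ℕ) (p : ℕ → Set W) : Prop :=
  p 0 = doset cs (I 0) (I 0) 1 ∧
  (∀ i ≤ d, IsDCoset cs (I 0) (I i) (p i)) ∧
  ∀ k < d, (I k ⊆ I (k + 1) → p k ⊆ p (k + 1)) ∧ (I (k + 1) ⊆ I k → p (k + 1) ⊆ p k)

/-- The Demazure product `w_{I_0} * w_{I_1} * ⋯ * w_{I_d}` of the longest elements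
`wI 0, …, wI d`. -/
noncomputable def exprMax (cs : CoxeterSystem M W) (wI : ℕ → W) (d : ℕ) : W :=
  ((List.range d).map fun k => wI (k + 1)).foldl (dem cs) (wI 0)

/-!
Induction on `ℓ x`. Write `x = y s` with `ℓ y < ℓ (y s)`; then `w s = z y` is still a reduced
product and `s` is a right descent of `w`, so by the lifting property `v ≤ w s` or `v s ≤ w s`.
In the first case the induction hypothesis applies to `v`, in the second to `v s`, and the extra
`s` is absorbed on the left of the resulting `x'` by `u ≤ q < q s → u s ≤ q s`, applied to
inverses.

Both lifting properties rest on the exchange rule for right inversions,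
`ℓ (w t s) < ℓ (w s) ↔ (ℓ (w t) < ℓ w ↔ t ≠ s)`, read off from a sign cocycle: `W` acts
on `W × ZMod 2` by letting `s` send `(t, ε)` to `(s t s, ε + [t = s])`, and the
`ZMod 2`-coordinate `reflSign w t` of the image of `(t, 0)` under `w` is `1` exactly when
`ℓ (w t) < ℓ w`.
-/

variable (cs : CoxeterSystem M W)

local prefix:100 "s" => cs.simple
local prefix:100 "ℓ" => cs.length

theorem eq_simple_mul_mul_simple_iff (i : B) (x y : W) :
    x = s i * y * s i ↔ s i * x * s i = y := by
  constructor <;> rintro rfl <;> simp [mul_assoc]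

theorem simple_mul_mul_simple_eq_simple_iff (i : B) (t : W) :
    s i * t * s i = s i ↔ t = s i := by
  rw [← eq_simple_mul_mul_simple_iff]
  simp

theorem induction_on_reduced_right {p : W → Prop} (one : p 1)
    (mul_simple : ∀ w i, ℓ w < ℓ (w * s i) → p w → p (w * s i)) (w : W) : p w := by
  obtain ⟨n, hn⟩ : ∃ n, ℓ w = n := ⟨_, rfl⟩
  induction n using Nat.strong_induction_on generalizing w with
  | _ n ih =>
    obtain rfl | hw := eq_or_ne w 1
    · exact one
    obtain ⟨i, hi⟩ := cs.exists_rightDescent_of_ne_one hw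
    have hw' := cs.simple_mul_simple_cancel_right (w := w) i
    have := mul_simple (w * s i) i (by rwa [hw']) (ih _ (hn ▸ hi) _ rfl)
    rwa [hw'] at this

theorem isReflection_simple_mul_mul_simple {t : W} (ht : cs.IsReflection t) (i : B) :
    cs.IsReflection (s i * t * s i) := by
  simpa using ht.conj (s i)

theorem mul_simple_mul_simple_mul_simple (u t : W) (i : B) :
    u * s i * (s i * t * s i) = u * t * s i := by
  simp [mul_assoc]

section ReflectionCocycle

open scoped Classical

noncomputable def simpleSignPerm (i : B) : Equiv.Perm (W × ZMod 2) :=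
  Function.Involutive.toPerm (fun p => (s i * p.1 * s i, p.2 + if p.1 = s i then 1 else 0))
    (fun ⟨t, ε⟩ => by
      simp only [simple_mul_mul_simple_eq_simple_iff, add_assoc, CharTwo.add_self_eq_zero,
        add_zero, Prod.mk.injEq, and_true]
      simp [mul_assoc])

theorem simpleSignPerm_apply (i : B) (t : W) (ε : ZMod 2) :
    simpleSignPerm cs i (t, ε) = (s i * t * s i, ε + if t = s i then 1 else 0) := rfl

theorem simpleSignPerm_mul_pow_apply (i i' : B) (n : ℕ) (t : W) (ε : ZMod 2) :
    ((simpleSignPerm cs i * simpleSignPerm cs i') ^ n) (t, ε) =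
      ((s i * s i') ^ n * t * ((s i * s i') ^ n)⁻¹,
        ε + ∑ j ∈ Finset.range (2 * n), if (s i' * s i) ^ j * s i' = t then 1 else 0) := by
  induction n generalizing t ε with
  | zero => simp
  | succ n ih =>
    rw [pow_succ, Equiv.Perm.mul_apply, Equiv.Perm.mul_apply, simpleSignPerm_apply,
      simpleSignPerm_apply, ih]
    have hconj : ∀ X,
        X = s i * (s i' * t * s i') * s i ↔ s i' * s i * X * (s i * s i') = t := by
      intro X
      rw [eq_simple_mul_mul_simple_iff cs i, eq_simple_mul_mul_simple_iff cs i']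
      simp only [mul_assoc]
    have hshift : ∀ j, (s i' * s i) ^ (j + 2) * s i' =
        s i' * s i * ((s i' * s i) ^ j * s i') * (s i * s i') := by
      intro j
      rw [pow_succ, pow_succ']
      simp [mul_assoc]
    ext
    · simp [pow_succ, mul_assoc]
    · dsimp only
      rw [show 2 * (n + 1) = 2 * n + 1 + 1 by ring, Finset.sum_range_succ',
        Finset.sum_range_succ']
      have hfirst : s i' * t * s i' = s i ↔ s i' * s i * s i' = t := by
        rw [eq_comm, eq_simple_mul_mul_simple_iff]
      simp only [hconj, ← hshift, zero_add, pow_zero, one_mul, pow_one, hfirst,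
        eq_comm (a := t) (b := s i')]
      ring

-- The reflections `(s i' * s i) ^ j * s i'` are `M i i'`-periodic in `j`, so for `n = M i i'`
-- each of them is counted twice.
theorem simpleSignPerm_isLiftable : M.IsLiftable (simpleSignPerm cs) := by
  intro i i'
  refine Equiv.ext fun ⟨t, ε⟩ => ?_
  rw [simpleSignPerm_mul_pow_apply, cs.simple_mul_simple_pow, two_mul, Finset.sum_range_add]
  simp only [pow_add, cs.simple_mul_simple_pow', one_mul, CharTwo.add_self_eq_zero]
  simp

noncomputable def signRep : W →* Equiv.Perm (W × ZMod 2) :=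
  cs.lift ⟨simpleSignPerm cs, simpleSignPerm_isLiftable cs⟩

noncomputable def reflSign (w t : W) : ZMod 2 := (signRep cs w (t, 0)).2

theorem signRep_simple (i : B) : signRep cs (s i) = simpleSignPerm cs i :=
  cs.lift_apply_simple (simpleSignPerm_isLiftable cs) i

theorem signRep_apply (w t : W) (ε : ZMod 2) :
    signRep cs w (t, ε) = (w * t * w⁻¹, ε + reflSign cs w t) := by
  induction w using cs.simple_induction_left generalizing t ε with
  | one => simp [reflSign]
  | mul_simple_left w i ih =>
    have hsign : reflSign cs (s i * w) t =
        reflSign cs w t + if w * t * w⁻¹ = s i then 1 else 0 := by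
      rw [reflSign, map_mul, Equiv.Perm.mul_apply, ih, signRep_simple, simpleSignPerm_apply,
        zero_add]
    rw [map_mul, Equiv.Perm.mul_apply, ih, signRep_simple, simpleSignPerm_apply, hsign]
    simp [mul_assoc, add_assoc]

theorem reflSign_mul (u v t : W) :
    reflSign cs (u * v) t = reflSign cs v t + reflSign cs u (v * t * v⁻¹) := by
  have h := signRep_apply cs (u * v) t 0
  rw [map_mul, Equiv.Perm.mul_apply, signRep_apply, signRep_apply] at h
  simpa using (congrArg Prod.snd h).symm

theorem reflSign_one (t : W) : reflSign cs 1 t = 0 := by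
  simp [reflSign]

theorem reflSign_simple (i : B) (t : W) : reflSign cs (s i) t = if t = s i then 1 else 0 := by
  simp [reflSign, signRep_simple, simpleSignPerm_apply]

theorem reflSign_self {t : W} (ht : cs.IsReflection t) : reflSign cs t t = 1 := by
  obtain ⟨u, i, rfl⟩ := ht
  have hinv := reflSign_mul cs u u⁻¹ (u * s i * u⁻¹)
  rw [mul_inv_cancel, reflSign_one] at hinv
  rw [reflSign_mul, reflSign_mul, reflSign_simple]
  simp only [mul_assoc, inv_mul_cancel_left, mul_inv_cancel, mul_one, cs.inv_simple,
    cs.simple_mul_simple_cancel_left, if_true] at hinv ⊢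
  linear_combination -hinv

theorem length_mul_lt_of_reflSign_eq_one (w t : W) (h : reflSign cs w t = 1) :
    ℓ (w * t) < ℓ w := by
  induction w using induction_on_reduced_right cs generalizing t with
  | one => simp [reflSign_one] at h
  | mul_simple w i hw ih =>
    obtain rfl | hti := eq_or_ne t (s i)
    · rwa [cs.simple_mul_simple_cancel_right]
    rw [reflSign_mul, reflSign_simple, if_neg hti, zero_add, cs.inv_simple] at h
    have hlen := ih _ h
    calc ℓ (w * s i * t) = ℓ (w * (s i * t * s i) * s i) := by simp [mul_assoc]
      _ ≤ ℓ (w * (s i * t * s i)) + ℓ (s i) := cs.length_mul_le _ _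
      _ < ℓ (w * s i) := by
        have := cs.length_mul_simple w i
        rw [cs.length_simple]
        omega

theorem length_mul_lt_iff_reflSign_eq_one {t : W} (ht : cs.IsReflection t) (w : W) :
    ℓ (w * t) < ℓ w ↔ reflSign cs w t = 1 := by
  refine ⟨fun hlt => ?_, length_mul_lt_of_reflSign_eq_one cs w t⟩
  by_contra hne
  have h0 : reflSign cs w t = 0 := by
    revert hne
    generalize reflSign cs w t = a
    decide +revert
  have hwt : reflSign cs (w * t) t = 1 := by
    rw [reflSign_mul, reflSign_self cs ht, mul_inv_cancel_right, h0, add_zero]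
  have := length_mul_lt_of_reflSign_eq_one cs _ _ hwt
  rw [mul_assoc, ht.mul_self, mul_one] at this
  omega

theorem length_mul_mul_simple_lt_iff {t : W} (ht : cs.IsReflection t) (w : W) (i : B) :
    ℓ (w * t * s i) < ℓ (w * s i) ↔ (ℓ (w * t) < ℓ w ↔ t ≠ s i) := by
  rw [← mul_simple_mul_simple_mul_simple,
    length_mul_lt_iff_reflSign_eq_one cs (isReflection_simple_mul_mul_simple cs ht i),
    length_mul_lt_iff_reflSign_eq_one cs ht, reflSign_mul, reflSign_simple,
    simple_mul_mul_simple_eq_simple_iff]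
  simp only [cs.inv_simple, mul_assoc, cs.simple_mul_simple_cancel_left,
    cs.simple_mul_simple_self, mul_one]
  obtain h | h : reflSign cs w t = 0 ∨ reflSign cs w t = 1 := by
    generalize reflSign cs w t = a
    decide +revert
  all_goals rw [h]; by_cases hti : t = s i <;> simp [hti]

end ReflectionCocycle

section BruhatOrder

theorem bruhatLE_refl (w : W) : BruhatLE cs w w := Relation.ReflTransGen.refl

variable {cs}

theorem BruhatLE.trans {u v w : W} (huv : BruhatLE cs u v) (hvw : BruhatLE cs v w) :
    BruhatLE cs u w :=
  Relation.ReflTransGen.trans huv hvw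

theorem bruhatLE_mul_of_length_lt {w t : W} (ht : cs.IsReflection t) (h : ℓ w < ℓ (w * t)) :
    BruhatLE cs w (w * t) :=
  Relation.ReflTransGen.single ⟨⟨t, ht, rfl⟩, h⟩

theorem bruhatLE_mul_simple {w : W} {i : B} (h : ℓ w < ℓ (w * s i)) : BruhatLE cs w (w * s i) :=
  bruhatLE_mul_of_length_lt (cs.isReflection_simple i) h

theorem bruhatLE_mul_simple_mul_mul_simple {u t : W} (ht : cs.IsReflection t) {i : B}
    (h : ℓ (u * s i) < ℓ (u * t * s i)) : BruhatLE cs (u * s i) (u * t * s i) := by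
  rw [← mul_simple_mul_simple_mul_simple] at h ⊢
  exact bruhatLE_mul_of_length_lt (isReflection_simple_mul_mul_simple cs ht i) h

theorem BruhatLE.inv {v w : W} (h : BruhatLE cs v w) : BruhatLE cs v⁻¹ w⁻¹ := by
  induction h with
  | refl => exact bruhatLE_refl cs _
  | @tail a _ _ hstep ih =>
    obtain ⟨⟨t, ht, rfl⟩, hlt⟩ := hstep
    have hinv : (a * t)⁻¹ = a⁻¹ * (a * t * a⁻¹) := by simp [ht.inv, mul_assoc]
    rw [hinv]
    refine ih.trans (bruhatLE_mul_of_length_lt (ht.conj a) ?_)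
    rwa [← hinv, cs.length_inv, cs.length_inv]

theorem BruhatLE.le_mul_simple_or_mul_simple_le {v w : W} (h : BruhatLE cs v w) {i : B}
    (hw : ℓ (w * s i) < ℓ w) : BruhatLE cs v (w * s i) ∨ BruhatLE cs (v * s i) (w * s i) := by
  induction h with
  | refl => exact Or.inr (bruhatLE_refl cs _)
  | @tail u _ hvu hstep ih =>
    obtain ⟨⟨t, ht, rfl⟩, hlt⟩ := hstep
    have hut := cs.length_mul_simple (u * t) i
    rcases cs.length_mul_simple u i with hu | hu
    · obtain rfl | hti := eq_or_ne t (s i)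
      · rw [cs.simple_mul_simple_cancel_right]
        exact Or.inl hvu
      have hlt' : ℓ (u * s i) < ℓ (u * t * s i) := by
        have := (length_mul_mul_simple_lt_iff cs ht (u * t) i).mpr
        rw [mul_assoc u t t, ht.mul_self, mul_one] at this
        exact this (iff_of_true hlt hti)
      exact Or.inl (hvu.trans ((bruhatLE_mul_simple (by omega)).trans
        (bruhatLE_mul_simple_mul_mul_simple ht hlt')))
    · have hstep' := bruhatLE_mul_simple_mul_mul_simple ht (u := u) (i := i) (by omega)
      exact (ih (by omega)).imp (·.trans hstep') (·.trans hstep')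

theorem BruhatLE.mul_simple_le_mul_simple {v w : W} (h : BruhatLE cs v w) {i : B}
    (hw : ℓ w < ℓ (w * s i)) : BruhatLE cs (v * s i) (w * s i) := by
  induction h using Relation.ReflTransGen.head_induction_on with
  | refl => exact bruhatLE_refl cs _
  | @head u _ hstep hrest ih =>
    obtain ⟨⟨t, ht, rfl⟩, hlt⟩ := hstep
    by_cases hlt' : ℓ (u * s i) < ℓ (u * t * s i)
    · exact (bruhatLE_mul_simple_mul_mul_simple ht hlt').trans ih
    have hts : t = s i := by
      have hne := (isReflection_simple_mul_mul_simple cs ht i).length_mul_left_ne (u * s i)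
      rw [mul_simple_mul_simple_mul_simple] at hne
      by_contra hti
      exact lt_asymm hlt (((length_mul_mul_simple_lt_iff cs ht u i).mp (by omega)).mpr hti)
    subst hts
    exact hrest.trans (bruhatLE_mul_simple hw)

end BruhatOrder

/-- Second lifting lemma: if `v ≤ w` and `w = z * x` reduced, then there is
`x' ≤ x⁻¹` with `v * x' ≤ z`. -/
theorem lifting_two_right (cs : CoxeterSystem M W) (v w x z : W) (h : BruhatLE cs v w)
    (hw : w = z * x) (hl : cs.length w = cs.length z + cs.length x) :
    ∃ x', BruhatLE cs x' x⁻¹ ∧ BruhatLE cs (v * x') z := by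
  subst hw
  induction x using induction_on_reduced_right cs generalizing v with
  | one => exact ⟨1, by simpa using bruhatLE_refl cs 1, by simpa using h⟩
  | mul_simple y i hy ih =>
    rw [← mul_assoc] at h hl
    have hyi := cs.length_mul_simple y i
    have hzy : cs.length (z * y) = cs.length z + cs.length y := by
      have := cs.length_mul_le (z * y) (cs.simple i)
      have := cs.length_mul_le z y
      rw [cs.length_simple] at *
      omega
    have hdesc :
        cs.length (z * y * cs.simple i * cs.simple i) < cs.length (z * y * cs.simple i) := by
      rw [cs.simple_mul_simple_cancel_right]
      omega
    rcases h.le_mul_simple_or_mul_simple_le hdesc with hv | hv <;>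
      rw [cs.simple_mul_simple_cancel_right] at hv
    · obtain ⟨x', hx', hvx'⟩ := ih v hv hzy
      exact ⟨x', hx'.trans (bruhatLE_mul_simple hy).inv, hvx'⟩
    · obtain ⟨x', hx', hvx'⟩ := ih (v * cs.simple i) hv hzy
      have hx'y : BruhatLE cs x'⁻¹ y := by simpa using hx'.inv
      refine ⟨cs.simple i * x', ?_, by rwa [← mul_assoc]⟩
      simpa using (hx'y.mul_simple_le_mul_simple hy).inv

end CoxeterPaper
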